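/- Let B be a Bratteli diagram with finitely many sources and let ℓ be the associated length function. Then for every real t ≥ 0 and every infinite path y ∈ X_B, the set {x ∈ X_B : x is tail-equivalent to y and ℓ(x,y) ≤ t} has at most t + 1 elements. In particular, the tail-equivalence groupoid of B has polynomial (indeed linear) growth with respect to ℓ. -/

import Mathlib

/-- A Bratteli diagram: nonempty finite vertex levels `V n` (`n ≥ 0`), finite edge
sets `E n` consisting of the edges from level `n` to level `n + 1`, with source and
target maps, such that every vertex emits at least one edge. -/
structure BratteliDiagram where
  V : ℕ → Type
  E : ℕ → Type
  vFinite : ∀ n, Finite (V n)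
  vNonempty : ∀ n, Nonempty (V n)
  eFinite : ∀ n, Finite (E n)
  src : ∀ n, E n → V n
  tgt : ∀ n, E n → V (n + 1)
  src_surjective : ∀ n, Function.Surjective (src n)

namespace BratteliDiagram

variable (B : BratteliDiagram)

/-- A vertex is a source if no edge has it as its target (in particular, every
level-0 vertex is a source). -/
def IsSource : (n : ℕ) → B.V n → Prop
  | 0, _ => True
  | n + 1, v => ¬ ∃ e : B.E n, B.tgt n e = v

/-- `B` has finitely many sources: beyond some level there are no sources. -/
def FinSources : Prop :=
  ∃ N : ℕ, ∀ n : ℕ, N < n → ∀ v : B.V n, ¬ B.IsSource n v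

/-- The type of finite paths in `B` starting at some source and ending at the
vertex `w` of level `k` (including the empty path when `w` itself is a source). -/
def PathEnd : (k : ℕ) → B.V k → Type
  | 0, w => PLift (B.IsSource 0 w)
  | k + 1, w =>
      PLift (B.IsSource (k + 1) w) ⊕
        Σ e : B.E k, PLift (B.tgt k e = w) × PathEnd k (B.src k e)

/-- `c_k = Σ_{v ∈ S(B)} |P(v, V_k)|`: the total number of finite paths from the
sources of `B` to level `k`. -/
noncomputable def pathCount (k : ℕ) : ℕ :=
  Nat.card (Σ w : B.V k, B.PathEnd k w)

/-- An infinite path of `B` starting at a source: `edge n _` is the edge from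
level `n` to level `n + 1` followed by the path (defined for `n ≥ start`). -/
structure InfPath where
  start : ℕ
  edge : ∀ n, start ≤ n → B.E n
  start_isSource : B.IsSource start (B.src start (edge start le_rfl))
  compat : ∀ n (h : start ≤ n),
    B.src (n + 1) (edge (n + 1) (h.trans (Nat.le_succ n))) = B.tgt n (edge n h)

variable {B}

/-- `x` and `y` both start at level at most `m` and their edges agree from
level `m` on (i.e. `x_n = y_n` for all paper-levels `n > m`). -/
def AgreesFrom (x y : B.InfPath) (m : ℕ) : Prop :=
  ∃ (hx : x.start ≤ m) (hy : y.start ≤ m),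
    ∀ n (h : m ≤ n), x.edge n (hx.trans h) = y.edge n (hy.trans h)

/-- Tail equivalence of infinite paths. -/
def TailEquiv (x y : B.InfPath) : Prop :=
  ∃ m : ℕ, AgreesFrom x y m

/-- `k(x,y)`: the least level from which the infinite paths `x` and `y` agree. -/
noncomputable def kIdx (x y : B.InfPath) : ℕ :=
  sInf {m : ℕ | AgreesFrom x y m}

/-- The length function associated with the Bratteli diagram `B`:
`ℓ(x,y) = c_{k(x,y)}` for `x ≠ y` and `ℓ(x,x) = 0`. -/
noncomputable def len (x y : B.InfPath) : ℕ :=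
  letI := Classical.dec (x = y)
  if x = y then 0 else B.pathCount (kIdx x y)

end BratteliDiagram

/-!
Every `x ≠ y` in the ball agrees with `y` from level `k(x,y)`, and a path agreeing with `y`
from level `k` is determined by its initial segment, a finite path from a source to level `k`;
so at most `c_k` paths agree with `y` from level `k`. Any finitely many `x ≠ y` in the ball all
agree with `y` from the largest of their levels `k(x,y)`, at which `c_k = ℓ(x,y) ≤ t`. Hence the
punctured ball has at most `t` elements.
-/

theorem Set.encard_le_of_forall_finite_subset {α : Type*} {s : Set α} {n : ℕ}
    (h : ∀ t ⊆ s, t.Finite → t.encard ≤ n) : s.encard ≤ n := by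
  by_contra! hlt
  obtain ⟨t, hts, ht⟩ := Set.exists_subset_encard_eq (Order.add_one_le_of_lt hlt)
  have := h t hts (Set.finite_of_encard_eq_coe ht)
  rw [ht] at this
  exact this.not_gt (by exact_mod_cast n.lt_succ_self)

namespace BratteliDiagram

variable {B : BratteliDiagram}

instance instFinitePathEnd : ∀ (k : ℕ) (w : B.V k), Finite (B.PathEnd k w)
  | 0, _ => inferInstanceAs (Finite (PLift _))
  | k + 1, _ =>
    haveI := B.eFinite k
    haveI := fun e : B.E k => instFinitePathEnd k (B.src k e)
    inferInstanceAs (Finite (_ ⊕ _))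

instance (k : ℕ) : Finite (Σ w : B.V k, B.PathEnd k w) :=
  haveI := B.vFinite k
  inferInstance

def startLevel : ∀ k : ℕ, (Σ w : B.V k, B.PathEnd k w) → ℕ
  | 0, _ => 0
  | k + 1, ⟨_, Sum.inl _⟩ => k + 1
  | k + 1, ⟨_, Sum.inr ⟨e, _, p⟩⟩ => startLevel k ⟨B.src k e, p⟩

def edgeAt? : ∀ k : ℕ, (Σ w : B.V k, B.PathEnd k w) → ∀ n : ℕ, Option (B.E n)
  | 0, _, _ => none
  | _ + 1, ⟨_, Sum.inl _⟩, _ => none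
  | k + 1, ⟨_, Sum.inr ⟨e, _, p⟩⟩, n =>
    if h : n = k then some (h ▸ e) else edgeAt? k ⟨B.src k e, p⟩ n

namespace InfPath

theorem ext_of_edge_eq {x x' : B.InfPath} (hstart : x.start = x'.start)
    (hedge : ∀ n (h : x.start ≤ n) (h' : x'.start ≤ n), x.edge n h = x'.edge n h') :
    x = x' := by
  rcases x with ⟨s, e, hs, hc⟩
  rcases x' with ⟨s', e', hs', hc'⟩
  obtain rfl : s = s' := hstart
  obtain rfl : e = e' := funext fun n => funext fun h => hedge n h h
  rfl

theorem isSource_of_start_eq (x : B.InfPath) {k : ℕ} (hx : x.start ≤ k) (hk : k = x.start) :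
    B.IsSource k (B.src k (x.edge k hx)) := by
  subst hk
  exact x.start_isSource

def trunc (x : B.InfPath) : ∀ (k : ℕ) (hx : x.start ≤ k), B.PathEnd k (B.src k (x.edge k hx))
  | 0, _ => PLift.up trivial
  | k + 1, hx =>
    if h : x.start ≤ k then
      Sum.inr ⟨x.edge k h, PLift.up (x.compat k h).symm, trunc x k h⟩
    else
      Sum.inl (PLift.up (x.isSource_of_start_eq hx (by omega)))

theorem trunc_succ_of_le (x : B.InfPath) {k : ℕ} (hx : x.start ≤ k + 1) (h : x.start ≤ k) :
    x.trunc (k + 1) hx = Sum.inr ⟨x.edge k h, PLift.up (x.compat k h).symm, x.trunc k h⟩ := by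
  rw [trunc]
  exact dif_pos h

theorem trunc_succ_of_not_le (x : B.InfPath) {k : ℕ} (hx : x.start ≤ k + 1) (h : ¬x.start ≤ k) :
    x.trunc (k + 1) hx = Sum.inl (PLift.up (x.isSource_of_start_eq hx (by omega))) := by
  rw [trunc]
  exact dif_neg h

theorem startLevel_trunc (x : B.InfPath) :
    ∀ (k : ℕ) (hx : x.start ≤ k), startLevel k ⟨_, x.trunc k hx⟩ = x.start
  | 0, hx => by simp only [startLevel]; omega
  | k + 1, hx => by
    by_cases h : x.start ≤ k
    · rw [x.trunc_succ_of_le hx h, startLevel, startLevel_trunc x k h]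
    · rw [x.trunc_succ_of_not_le hx h, startLevel]
      omega

theorem edgeAt?_trunc (x : B.InfPath) :
    ∀ (k : ℕ) (hx : x.start ≤ k) (n : ℕ) (hn : x.start ≤ n),
      n < k → edgeAt? k ⟨_, x.trunc k hx⟩ n = some (x.edge n hn)
  | 0, _, _, _, hnk => absurd hnk (Nat.not_lt_zero _)
  | k + 1, hx, n, hn, hnk => by
    have h : x.start ≤ k := by omega
    rw [x.trunc_succ_of_le hx h, edgeAt?]
    by_cases hk : n = k
    · subst hk
      rw [dif_pos rfl]
    · rw [dif_neg hk, edgeAt?_trunc x k h n hn (by omega)]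

theorem eq_of_trunc_eq {x x' : B.InfPath} {k : ℕ} (hx : x.start ≤ k) (hx' : x'.start ≤ k)
    (htrunc : (⟨_, x.trunc k hx⟩ : Σ w, B.PathEnd k w) = ⟨_, x'.trunc k hx'⟩)
    (htail : ∀ n (h : k ≤ n), x.edge n (hx.trans h) = x'.edge n (hx'.trans h)) : x = x' := by
  refine ext_of_edge_eq ?_ fun n hn hn' => ?_
  · rw [← x.startLevel_trunc k hx, ← x'.startLevel_trunc k hx', htrunc]
  · rcases lt_or_ge n k with hlt | hge
    · apply Option.some.inj
      rw [← x.edgeAt?_trunc k hx n hn hlt, ← x'.edgeAt?_trunc k hx' n hn' hlt, htrunc]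
    · exact htail n hge

end InfPath

theorem AgreesFrom.mono {x y : B.InfPath} {m m' : ℕ} (h : AgreesFrom x y m) (hm : m ≤ m') :
    AgreesFrom x y m' :=
  let ⟨hx, hy, hxy⟩ := h
  ⟨hx.trans hm, hy.trans hm, fun n hn => hxy n (hm.trans hn)⟩

theorem TailEquiv.agreesFrom_kIdx {x y : B.InfPath} (h : TailEquiv x y) :
    AgreesFrom x y (kIdx x y) :=
  Nat.sInf_mem h

theorem len_of_ne {x y : B.InfPath} (h : x ≠ y) : len x y = B.pathCount (kIdx x y) :=
  if_neg h

theorem encard_agreesFrom_le (y : B.InfPath) (k : ℕ) :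
    {x : B.InfPath | AgreesFrom x y k}.encard ≤ B.pathCount k := by
  let f : {x : B.InfPath // AgreesFrom x y k} → Σ w : B.V k, B.PathEnd k w :=
    fun x => ⟨_, x.1.trunc k x.2.choose⟩
  have hf : Function.Injective f := by
    rintro ⟨x, hA⟩ ⟨x', hA'⟩ h
    have ⟨hx, _, hxy⟩ := hA
    have ⟨hx', _, hx'y⟩ := hA'
    exact Subtype.ext <| InfPath.eq_of_trunc_eq hx hx' h fun n hn =>
      (hxy n hn).trans (hx'y n hn).symm
  calc {x : B.InfPath | AgreesFrom x y k}.encard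
      ≤ ENat.card (Σ w : B.V k, B.PathEnd k w) := ENat.card_le_card_of_injective hf
    _ = B.pathCount k := ENat.card_eq_coe_natCard _

theorem encard_punctured_lenBall_le (y : B.InfPath) (n : ℕ) :
    {x : B.InfPath | x ≠ y ∧ TailEquiv x y ∧ len x y ≤ n}.encard ≤ n := by
  refine Set.encard_le_of_forall_finite_subset fun T hT hTfin => ?_
  rcases T.eq_empty_or_nonempty with rfl | hne
  · simp
  obtain ⟨x₁, hx₁, hmax⟩ := Set.exists_max_image T (fun x => kIdx x y) hTfin hne
  have hT_agree : T ⊆ {x | AgreesFrom x y (kIdx x₁ y)} := fun x hx =>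
    (hT hx).2.1.agreesFrom_kIdx.mono (hmax x hx)
  obtain ⟨hne₁, -, hlen₁⟩ := hT hx₁
  calc T.encard ≤ {x | AgreesFrom x y (kIdx x₁ y)}.encard := Set.encard_le_encard hT_agree
    _ ≤ B.pathCount (kIdx x₁ y) := encard_agreesFrom_le y _
    _ ≤ n := by rw [← len_of_ne hne₁]; exact_mod_cast hlen₁

theorem encard_lenBall_le (y : B.InfPath) (n : ℕ) :
    {x : B.InfPath | TailEquiv x y ∧ len x y ≤ n}.encard ≤ n + 1 := by
  have hsub : {x : B.InfPath | TailEquiv x y ∧ len x y ≤ n} ⊆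
      insert y {x | x ≠ y ∧ TailEquiv x y ∧ len x y ≤ n} := fun x hx =>
    or_iff_not_imp_left.mpr fun hxy => ⟨hxy, hx⟩
  calc _ ≤ _ := Set.encard_le_encard hsub
    _ ≤ _ := Set.encard_insert_le _ _
    _ ≤ n + 1 := by gcongr; exact encard_punctured_lenBall_le y n

end BratteliDiagram

open BratteliDiagram in
theorem bratteliLen_linear_growth_general (B : BratteliDiagram)
    (t : ℝ) (ht : 0 ≤ t) (y : B.InfPath) :
    {x : B.InfPath | TailEquiv x y ∧ (len x y : ℝ) ≤ t}.Finite ∧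
      (Nat.card {x : B.InfPath // TailEquiv x y ∧ (len x y : ℝ) ≤ t} : ℝ) ≤ t + 1 := by
  have hball : {x : B.InfPath | TailEquiv x y ∧ (len x y : ℝ) ≤ t} =
      {x | TailEquiv x y ∧ len x y ≤ ⌊t⌋₊} := by
    ext x
    simp only [Set.mem_ofPred_eq, Nat.le_floor_iff ht]
  obtain ⟨hfin, hcard⟩ := Set.encard_le_coe_iff_finite_ncard_le.mp (encard_lenBall_le y ⌊t⌋₊)
  refine ⟨hball ▸ hfin, ?_⟩
  calc (Nat.card {x : B.InfPath // TailEquiv x y ∧ (len x y : ℝ) ≤ t} : ℝ)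
      = ({x | TailEquiv x y ∧ len x y ≤ ⌊t⌋₊} : Set B.InfPath).ncard := by
        rw [← hball]; rfl
    _ ≤ ⌊t⌋₊ + 1 := by exact_mod_cast hcard
    _ ≤ t + 1 := by linarith [Nat.floor_le ht]

open BratteliDiagram in
/-- Lemma 4.7: the tail-equivalence groupoid of a Bratteli diagram with finitely many
sources has linear growth with respect to the length function `ℓ`: for every `t ≥ 0`
and every infinite path `y`, the set of `x` tail-equivalent to `y` with `ℓ(x,y) ≤ t`
has at most `t + 1` elements. -/
theorem bratteliLen_linear_growth (B : BratteliDiagram) (hB : B.FinSources)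
    (t : ℝ) (ht : 0 ≤ t) (y : B.InfPath) :
    {x : B.InfPath | TailEquiv x y ∧ (len x y : ℝ) ≤ t}.Finite ∧
      (Nat.card {x : B.InfPath // TailEquiv x y ∧ (len x y : ℝ) ≤ t} : ℝ) ≤ t + 1 :=
  bratteliLen_linear_growth_general B t ht y
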